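/- If a program P and a query Ā are both well-moded and simply moded, then every LD-derivation of Ā in P is unification-free: whenever an atom A is selected and resolved via a (variable-disjoint variant of a) clause H ← B̄ of P, the unification of A and H reduces to a double matching — there is a substitution matching the input positions of H to those of A (i.e., a substitution θ₁ acting only on variables of H with (input terms of H)θ₁ = input terms of A) and a substitution matching the output positions of A to those of Hθ₁ (i.e., a substitution θ₂ acting only on variables of A with (output terms of A)θ₂ = output terms of Hθ₁), and the composition yields a most general unifier of A and H. -/

import Mathlib

/-- First-order terms over function symbols `F` and variables `V`. -/
inductive Term (F V : Type) : Type where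
  | var : V → Term F V
  | fn  : F → List (Term F V) → Term F V

namespace Term

/-- `VarIn v t` holds iff the variable `v` occurs in the term `t`. -/
inductive VarIn {F V : Type} : V → Term F V → Prop where
  | var (v : V) : VarIn v (.var v)
  | fn {v : V} (f : F) {args : List (Term F V)} {t : Term F V} :
      t ∈ args → VarIn v t → VarIn v (.fn f args)

/-- Application of a substitution (a map from variables to terms) to a term. -/
def subst {F V : Type} (σ : V → Term F V) : Term F V → Term F V
  | .var v => σ v
  | .fn f args => .fn f (args.attach.map fun t => subst σ t.1)
termination_by t => sizeOf t
decreasing_by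
  have := List.sizeOf_lt_of_mem t.2
  simp only [Term.fn.sizeOf_spec]
  omega

end Term

/-- The set of variables occurring in a list (tuple) of terms. -/
def varsOf {F V : Type} (ts : List (Term F V)) : Set V :=
  {v | ∃ t ∈ ts, Term.VarIn v t}

/-- An atom `p(s̄, t̄)`: a relation symbol together with the tuple of terms
filling its input positions and the tuple filling its output positions. -/
structure Atom (P F V : Type) where
  pred : P
  inputs : List (Term F V)
  outputs : List (Term F V)

/-- Application of a substitution to an atom. -/
def Atom.subst {P F V : Type} (σ : V → Term F V) (A : Atom P F V) : Atom P F V :=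
  ⟨A.pred, A.inputs.map (Term.subst σ), A.outputs.map (Term.subst σ)⟩

/-- The set of variables occurring in an atom. -/
def Atom.vars {P F V : Type} (A : Atom P F V) : Set V :=
  varsOf A.inputs ∪ varsOf A.outputs

/-- The set of variables occurring in a query (a list of atoms). -/
def queryVars {P F V : Type} (Q : List (Atom P F V)) : Set V :=
  {v | ∃ a ∈ Q, v ∈ a.vars}

/-- A query `p_1(s̄_1,t̄_1), …, p_n(s̄_n,t̄_n)` is well-moded iff for every `i`,
`Var(s̄_i) ⊆ ⋃_{j=1}^{i-1} Var(t̄_j)`. -/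
def WellModedQuery {P F V : Type} (Q : List (Atom P F V)) : Prop :=
  ∀ i (h : i < Q.length),
    varsOf (Q.get ⟨i, h⟩).inputs ⊆ varsOf (((Q.take i).map Atom.outputs).flatten)

/-- A clause `p_0(t̄_0, s̄_{n+1}) ← p_1(s̄_1,t̄_1), …, p_n(s̄_n,t̄_n)` (with head
input tuple `t̄_0 = head.inputs` and head output tuple `s̄_{n+1} = head.outputs`)
is well-moded iff for every `i ∈ [1, n+1]`, `Var(s̄_i) ⊆ ⋃_{j=0}^{i-1} Var(t̄_j)`. -/
def WellModedClause {P F V : Type} (head : Atom P F V) (body : List (Atom P F V)) : Prop :=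
  (∀ i (h : i < body.length),
    varsOf (body.get ⟨i, h⟩).inputs ⊆
      varsOf (head.inputs ++ ((body.take i).map Atom.outputs).flatten)) ∧
  varsOf head.outputs ⊆ varsOf (head.inputs ++ (body.map Atom.outputs).flatten)

/-- Composition of substitutions: first apply `θ`, then `τ`. -/
def Subst.comp {F V : Type} (θ τ : V → Term F V) : V → Term F V :=
  fun v => (θ v).subst τ

/-- `θ` is a unifier of the atoms `A` and `H` iff `Aθ = Hθ`. -/
def IsUnifier {P F V : Type} (θ : V → Term F V) (A H : Atom P F V) : Prop :=
  A.subst θ = H.subst θ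

/-- `θ` is a most general unifier of `A` and `H` iff it is a unifier and every
unifier of `A` and `H` factors through it. -/
def IsMGU {P F V : Type} (θ : V → Term F V) (A H : Atom P F V) : Prop :=
  IsUnifier θ A H ∧ ∀ σ : V → Term F V, IsUnifier σ A H → ∃ τ : V → Term F V,
    ∀ v, σ v = (θ v).subst τ

/-- A clause `p_0(s̄_0, t̄_{n+1}) ← p_1(s̄_1,t̄_1), …, p_n(s̄_n,t̄_n)` (with head
input tuple `s̄_0 = head.inputs`) is simply moded iff `t̄_1, …, t̄_n` is a linear
family of variables (every term in the body output tuples is a variable, and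
each such variable occurs exactly once among them) and for every `i ∈ [1, n]`,
`Var(t̄_i) ∩ ⋃_{j=0}^{i} Var(s̄_j) = ∅`. -/
def SimplyModedClause {P F V : Type} (head : Atom P F V) (body : List (Atom P F V)) : Prop :=
  (∀ t ∈ (body.map Atom.outputs).flatten, ∃ v : V, t = Term.var v) ∧
  ((body.map Atom.outputs).flatten).Nodup ∧
  ∀ i (h : i < body.length),
    varsOf (body.get ⟨i, h⟩).outputs ∩
      varsOf (head.inputs ++ ((body.take (i + 1)).map Atom.inputs).flatten) = ∅

/-- A query is simply moded iff the clause `q ← Ā` with a dummy zero-arity head is. -/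
def SimplyModedQuery {P F V : Type} (Q : List (Atom P F V)) : Prop :=
  (∀ t ∈ (Q.map Atom.outputs).flatten, ∃ v : V, t = Term.var v) ∧
  ((Q.map Atom.outputs).flatten).Nodup ∧
  ∀ i (h : i < Q.length),
    varsOf (Q.get ⟨i, h⟩).outputs ∩
      varsOf (((Q.take (i + 1)).map Atom.inputs).flatten) = ∅

/-- A definite clause `head ← body`. -/
structure Clause (P F V : Type) where
  head : Atom P F V
  body : List (Atom P F V)

/-- Application of a substitution to a clause. -/
def Clause.subst {P F V : Type} (σ : V → Term F V) (c : Clause P F V) : Clause P F V :=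
  ⟨c.head.subst σ, c.body.map (Atom.subst σ)⟩

/-- The set of variables occurring in a clause. -/
def Clause.vars {P F V : Type} (c : Clause P F V) : Set V :=
  c.head.vars ∪ queryVars c.body

/-- One step of LD-resolution in the program `Prog`: the leftmost atom `A` of the
current query is the selected atom, and the next query is `(B̄ ++ rest)θ` where
`H ← B̄` is a variant (obtained via a renaming `ρ`) of a clause of `Prog` that is
variable-disjoint with the current query and `θ` is a most general unifier of
`A` and `H`. -/
def LDStep {P F V : Type} (Prog : Set (Clause P F V))
    (Q Q' : List (Atom P F V)) : Prop :=
  ∃ (A : Atom P F V) (rest : List (Atom P F V)) (c : Clause P F V)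
    (ρ : V → V) (θ : V → Term F V),
    Q = A :: rest ∧ c ∈ Prog ∧ Function.Injective ρ ∧
    Disjoint (queryVars Q) (Clause.vars (c.subst (fun v => Term.var (ρ v)))) ∧
    IsMGU θ A (c.subst (fun v => Term.var (ρ v))).head ∧
    Q' = ((c.subst (fun v => Term.var (ρ v))).body ++ rest).map (Atom.subst θ)

/-!
In a well-moded, simply moded query the selected (leftmost) atom `A` has ground inputs and
pairwise distinct variables as outputs, and it shares no variable with the renamed clause
head `H`. Hence any unifier `σ` grounds the input variables of `H`; restricting `σ` to them gives
the matching `θ₁` of the inputs of `H` onto those of `A`, and sending the `i`-th output variable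
of `A` to the `i`-th output of `Hθ₁` gives `θ₂`. Every unifier `σ'` satisfies `θ₁σ' = σ'` and
`θ₂σ' = σ'`, so `θ₁θ₂` is a most general unifier.

For this to apply at every step of a derivation, both properties must persist. Well-modedness
survives resolution with any unifier. Simple modedness survives resolution with `θ₁θ₂`, which
only grounds head inputs and maps the outputs of `A` into fresh head-output variables; an
arbitrary mgu `θ` yields a variant of that resolvent (`θ` and `θ₁θ₂` factor through each other,
so they differ by a renaming on its variables), and simple modedness is invariant under
renaming.
-/

theorem Set.InjOn.disjoint_image {α β : Type*} {f : α → β} {s t u : Set α}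
    (hf : Set.InjOn f u) (hs : s ⊆ u) (ht : t ⊆ u) (h : Disjoint s t) :
    Disjoint (f '' s) (f '' t) := by
  rw [Set.disjoint_iff_inter_eq_empty] at h ⊢
  rw [← hf.image_inter hs ht, h, Set.image_empty]

namespace Term

variable {F V : Type}

@[elab_as_elim]
theorem ind {motive : Term F V → Prop} (var : ∀ v, motive (.var v))
    (fn : ∀ f args, (∀ t ∈ args, motive t) → motive (.fn f args)) (t : Term F V) :
    motive t :=
  Term.rec (motive_2 := fun args => ∀ t ∈ args, motive t) var fn (by simp)
    (fun _ _ ht hts => List.forall_mem_cons.2 ⟨ht, hts⟩) t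

@[simp] theorem subst_var (σ : V → Term F V) (v : V) : (Term.var v).subst σ = σ v := by
  simp [Term.subst]

@[simp] theorem subst_fn (σ : V → Term F V) (f : F) (args : List (Term F V)) :
    (Term.fn f args).subst σ = .fn f (args.map (Term.subst σ)) := by
  rw [Term.subst]
  simp [List.attach, List.attachWith, List.map_pmap]

@[simp] theorem varIn_var_iff {v w : V} : VarIn (F := F) v (.var w) ↔ v = w :=
  ⟨fun | .var _ => rfl, fun h => h ▸ .var v⟩

@[simp] theorem varIn_fn_iff {v : V} {f : F} {args : List (Term F V)} :
    VarIn v (.fn f args) ↔ ∃ t ∈ args, VarIn v t :=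
  ⟨fun | .fn _ ht hv => ⟨_, ht, hv⟩, fun ⟨_, ht, hv⟩ => .fn f ht hv⟩

theorem subst_eq_subst_iff {σ τ : V → Term F V} {t : Term F V} :
    t.subst σ = t.subst τ ↔ ∀ v, VarIn v t → σ v = τ v := by
  induction t using Term.ind with
  | var v => simp
  | fn f args ih =>
    simp only [subst_fn, fn.injEq, true_and, List.map_inj_left, varIn_fn_iff]
    grind

@[simp] theorem subst_var_eq_id : Term.subst (F := F) (V := V) .var = id := by
  funext t
  induction t using Term.ind with
  | var v => simp
  | fn f args ih => simpa using List.map_congr_left ih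

theorem subst_subst (σ τ : V → Term F V) (t : Term F V) :
    (t.subst σ).subst τ = t.subst (Subst.comp σ τ) := by
  induction t using Term.ind with
  | var v => simp [Subst.comp]
  | fn f args ih => simpa using List.map_congr_left ih

theorem varIn_subst {σ : V → Term F V} {w : V} {t : Term F V} :
    VarIn w (t.subst σ) ↔ ∃ v, VarIn v t ∧ VarIn w (σ v) := by
  induction t using Term.ind with
  | var v => simp
  | fn f args ih =>
    simp only [subst_fn, varIn_fn_iff, List.mem_map]
    grind

end Term

section Vars

variable {P F V : Type}

open Term

@[simp] theorem varsOf_nil : varsOf ([] : List (Term F V)) = ∅ := by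
  simp [varsOf]

@[simp] theorem varsOf_append (l₁ l₂ : List (Term F V)) :
    varsOf (l₁ ++ l₂) = varsOf l₁ ∪ varsOf l₂ := by
  ext v
  simp [varsOf, or_and_right, exists_or]

theorem mem_varsOf_map_subst {σ : V → Term F V} {ts : List (Term F V)} {w : V} :
    w ∈ varsOf (ts.map (Term.subst σ)) ↔ ∃ v ∈ varsOf ts, VarIn w (σ v) := by
  simp only [varsOf, Set.mem_ofPred_eq, List.mem_map, exists_exists_and_eq_and, varIn_subst]
  grind

theorem map_subst_eq_map_subst_iff {σ τ : V → Term F V} {ts : List (Term F V)} :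
    ts.map (Term.subst σ) = ts.map (Term.subst τ) ↔ ∀ v ∈ varsOf ts, σ v = τ v := by
  simp only [List.map_inj_left, subst_eq_subst_iff, varsOf, Set.mem_ofPred_eq]
  grind

theorem map_subst_eq_self {σ : V → Term F V} {ts : List (Term F V)}
    (h : ∀ v ∈ varsOf ts, σ v = .var v) : ts.map (Term.subst σ) = ts := by
  simpa using (map_subst_eq_map_subst_iff (τ := .var)).2 h

theorem map_subst_subst (σ τ : V → Term F V) (ts : List (Term F V)) :
    (ts.map (Term.subst σ)).map (Term.subst τ) = ts.map (Term.subst (Subst.comp σ τ)) := by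
  simp [Function.comp_def, subst_subst]

theorem varsOf_map_var (xs : List V) : varsOf (xs.map (Term.var (F := F))) = {v | v ∈ xs} := by
  ext v
  simp [varsOf]

theorem varsOf_map_rename (r : V → V) (ts : List (Term F V)) :
    varsOf (ts.map (Term.subst fun v => .var (r v))) = r '' varsOf ts := by
  ext w
  simp only [mem_varsOf_map_subst, varIn_var_iff, Set.mem_image]
  grind

theorem Atom.subst_subst (σ τ : V → Term F V) (a : Atom P F V) :
    (a.subst σ).subst τ = a.subst (Subst.comp σ τ) := by
  simp [Atom.subst, Term.subst_subst]

theorem Atom.subst_eq_subst_iff {σ τ : V → Term F V} {a : Atom P F V} :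
    a.subst σ = a.subst τ ↔ ∀ v ∈ a.vars, σ v = τ v := by
  simp only [Atom.subst, Atom.mk.injEq, true_and, map_subst_eq_map_subst_iff, Atom.vars,
    Set.mem_union]
  grind

theorem map_atomSubst_eq_iff {σ τ : V → Term F V} {Q : List (Atom P F V)} :
    Q.map (Atom.subst σ) = Q.map (Atom.subst τ) ↔ ∀ v ∈ queryVars Q, σ v = τ v := by
  simp only [List.map_inj_left, Atom.subst_eq_subst_iff, queryVars, Set.mem_ofPred_eq]
  grind

@[simp] theorem Atom.subst_var_self (a : Atom P F V) : a.subst .var = a := by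
  simp [Atom.subst]

@[simp] theorem Atom.inputs_subst (σ : V → Term F V) (a : Atom P F V) :
    (a.subst σ).inputs = a.inputs.map (Term.subst σ) := rfl

@[simp] theorem Atom.outputs_subst (σ : V → Term F V) (a : Atom P F V) :
    (a.subst σ).outputs = a.outputs.map (Term.subst σ) := rfl

theorem queryVars_cons (a : Atom P F V) (Q : List (Atom P F V)) :
    queryVars (a :: Q) = a.vars ∪ queryVars Q := by
  ext v
  simp [queryVars]

def outsOf (Q : List (Atom P F V)) : List (Term F V) := (Q.map Atom.outputs).flatten

def insOf (Q : List (Atom P F V)) : List (Term F V) := (Q.map Atom.inputs).flatten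

@[simp] theorem outsOf_nil : outsOf ([] : List (Atom P F V)) = [] := rfl

@[simp] theorem insOf_nil : insOf ([] : List (Atom P F V)) = [] := rfl

@[simp] theorem outsOf_cons (a : Atom P F V) (Q : List (Atom P F V)) :
    outsOf (a :: Q) = a.outputs ++ outsOf Q := rfl

@[simp] theorem insOf_cons (a : Atom P F V) (Q : List (Atom P F V)) :
    insOf (a :: Q) = a.inputs ++ insOf Q := rfl

@[simp] theorem outsOf_append (Q₁ Q₂ : List (Atom P F V)) :
    outsOf (Q₁ ++ Q₂) = outsOf Q₁ ++ outsOf Q₂ := by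
  simp [outsOf]

@[simp] theorem insOf_append (Q₁ Q₂ : List (Atom P F V)) :
    insOf (Q₁ ++ Q₂) = insOf Q₁ ++ insOf Q₂ := by
  simp [insOf]

@[simp] theorem outsOf_map_subst (σ : V → Term F V) (Q : List (Atom P F V)) :
    outsOf (Q.map (Atom.subst σ)) = (outsOf Q).map (Term.subst σ) := by
  simp [outsOf, List.map_flatten, Function.comp_def, Atom.subst]

@[simp] theorem insOf_map_subst (σ : V → Term F V) (Q : List (Atom P F V)) :
    insOf (Q.map (Atom.subst σ)) = (insOf Q).map (Term.subst σ) := by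
  simp [insOf, List.map_flatten, Function.comp_def, Atom.subst]

theorem queryVars_eq (Q : List (Atom P F V)) :
    queryVars Q = varsOf (insOf Q) ∪ varsOf (outsOf Q) := by
  ext v
  simp [queryVars, Atom.vars, varsOf, insOf, outsOf]
  grind

end Vars

section Modes

variable {P F V : Type}

open Term

/-- Well-modedness of `Q` when the variables of `S` are already produced; for a clause body,
`S` is the set of head input variables. -/
def WellModedFrom : Set V → List (Atom P F V) → Prop
  | _, [] => True
  | S, a :: Q => varsOf a.inputs ⊆ S ∧ WellModedFrom (S ∪ varsOf a.outputs) Q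

theorem wellModedFrom_iff {S : Set V} {Q : List (Atom P F V)} :
    WellModedFrom S Q ↔
      ∀ i (h : i < Q.length), varsOf Q[i].inputs ⊆ S ∪ varsOf (outsOf (Q.take i)) := by
  induction Q generalizing S with
  | nil => simp [WellModedFrom]
  | cons a Q ih =>
    simp only [WellModedFrom, ih]
    constructor
    · rintro ⟨h0, h⟩ (_ | i) hi
      · simpa using h0
      · simpa [Set.union_assoc] using h i (by simpa using hi)
    · intro h
      refine ⟨?_, fun i hi => ?_⟩
      · simpa using h 0 (Nat.zero_lt_succ _)
      · simpa [Set.union_assoc] using h (i + 1) (Nat.succ_lt_succ hi)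

theorem wellModedQuery_iff {Q : List (Atom P F V)} : WellModedQuery Q ↔ WellModedFrom ∅ Q := by
  simp [wellModedFrom_iff, WellModedQuery, outsOf]

theorem wellModedClause_iff {head : Atom P F V} {body : List (Atom P F V)} :
    WellModedClause head body ↔ WellModedFrom (varsOf head.inputs) body ∧
      varsOf head.outputs ⊆ varsOf head.inputs ∪ varsOf (outsOf body) := by
  simp [wellModedFrom_iff, WellModedClause, outsOf]

theorem wellModedFrom_append {S : Set V} {Q₁ Q₂ : List (Atom P F V)} :
    WellModedFrom S (Q₁ ++ Q₂) ↔
      WellModedFrom S Q₁ ∧ WellModedFrom (S ∪ varsOf (outsOf Q₁)) Q₂ := by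
  induction Q₁ generalizing S with
  | nil => simp [WellModedFrom]
  | cons a Q ih => simp [WellModedFrom, ih, Set.union_assoc, and_assoc]

theorem WellModedFrom.map_subst {S T : Set V} {σ : V → Term F V} {Q : List (Atom P F V)}
    (h : WellModedFrom S Q) (hST : ∀ v ∈ S, ∀ w, VarIn w (σ v) → w ∈ T) :
    WellModedFrom T (Q.map (Atom.subst σ)) := by
  induction Q generalizing S T with
  | nil => trivial
  | cons a Q ih =>
    obtain ⟨ha, hQ⟩ := h
    refine ⟨fun w hw => ?_, ih hQ fun v hv w hw => ?_⟩
    · obtain ⟨v, hv, hwv⟩ := mem_varsOf_map_subst.1 hw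
      exact hST v (ha hv) w hwv
    · rcases hv with hv | hv
      · exact .inl (hST v hv w hw)
      · exact .inr (mem_varsOf_map_subst.2 ⟨v, hv, hw⟩)

/-- The disjointness half of simple modedness, when the variables of `S` are already consumed;
for a clause body, `S` is the set of head input variables. -/
def SimplyModedFrom : Set V → List (Atom P F V) → Prop
  | _, [] => True
  | S, a :: Q => Disjoint (varsOf a.outputs) (S ∪ varsOf a.inputs) ∧
      SimplyModedFrom (S ∪ varsOf a.inputs) Q

theorem simplyModedFrom_iff {S : Set V} {Q : List (Atom P F V)} :
    SimplyModedFrom S Q ↔ ∀ i (h : i < Q.length),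
      varsOf Q[i].outputs ∩ (S ∪ varsOf (insOf (Q.take (i + 1)))) = ∅ := by
  induction Q generalizing S with
  | nil => simp [SimplyModedFrom]
  | cons a Q ih =>
    simp only [SimplyModedFrom, ih, Set.disjoint_iff_inter_eq_empty]
    constructor
    · rintro ⟨h0, h⟩ (_ | i) hi
      · simpa using h0
      · simpa [Set.union_assoc] using h i (by simpa using hi)
    · intro h
      refine ⟨?_, fun i hi => ?_⟩
      · simpa using h 0 (Nat.zero_lt_succ _)
      · simpa [Set.union_assoc] using h (i + 1) (Nat.succ_lt_succ hi)

def IsLinear (ts : List (Term F V)) : Prop :=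
  ∃ xs : List V, xs.Nodup ∧ ts = xs.map .var

theorem isLinear_iff {ts : List (Term F V)} :
    IsLinear ts ↔ (∀ t ∈ ts, ∃ v, t = .var v) ∧ ts.Nodup := by
  constructor
  · rintro ⟨xs, hxs, rfl⟩
    exact ⟨by simp, hxs.map fun _ _ => Term.var.inj⟩
  · rintro ⟨hvar, hnd⟩
    induction ts with
    | nil => exact ⟨[], by simp⟩
    | cons t ts ih =>
      obtain ⟨v, rfl⟩ := hvar t (by simp)
      obtain ⟨xs, hxs, rfl⟩ := ih (fun t ht => hvar t (by simp [ht])) hnd.of_cons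
      refine ⟨v :: xs, List.nodup_cons.2 ⟨fun h => ?_, hxs⟩, rfl⟩
      exact (List.nodup_cons.1 hnd).1 (List.mem_map_of_mem h)

theorem simplyModedQuery_iff {Q : List (Atom P F V)} :
    SimplyModedQuery Q ↔ IsLinear (outsOf Q) ∧ SimplyModedFrom ∅ Q := by
  simp [simplyModedFrom_iff, SimplyModedQuery, isLinear_iff, insOf, outsOf, and_assoc]

theorem simplyModedClause_iff {head : Atom P F V} {body : List (Atom P F V)} :
    SimplyModedClause head body ↔
      IsLinear (outsOf body) ∧ SimplyModedFrom (varsOf head.inputs) body := by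
  simp [simplyModedFrom_iff, SimplyModedClause, isLinear_iff, insOf, outsOf, and_assoc]

theorem isLinear_append {l₁ l₂ : List (Term F V)} :
    IsLinear (l₁ ++ l₂) ↔ IsLinear l₁ ∧ IsLinear l₂ ∧ Disjoint (varsOf l₁) (varsOf l₂) := by
  constructor
  · rintro ⟨xs, hxs, h⟩
    obtain ⟨xs₁, xs₂, rfl, rfl, rfl⟩ := List.map_eq_append_iff.1 h.symm
    obtain ⟨h₁, h₂, h₁₂⟩ := List.nodup_append.1 hxs
    refine ⟨⟨xs₁, h₁, rfl⟩, ⟨xs₂, h₂, rfl⟩, ?_⟩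
    simp only [varsOf_map_var, Set.disjoint_left, Set.mem_ofPred_eq]
    exact fun v hv₁ hv₂ => h₁₂ v hv₁ v hv₂ rfl
  · rintro ⟨⟨xs₁, h₁, rfl⟩, ⟨xs₂, h₂, rfl⟩, h₁₂⟩
    refine ⟨xs₁ ++ xs₂, List.nodup_append.2 ⟨h₁, h₂, ?_⟩, by simp⟩
    simp only [varsOf_map_var, Set.disjoint_left, Set.mem_ofPred_eq] at h₁₂
    exact fun v hv₁ _ hv₂ hv => h₁₂ hv₁ (hv ▸ hv₂)

theorem IsLinear.map_rename {ts : List (Term F V)} {r : V → V} (h : IsLinear ts)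
    (hr : Set.InjOn r (varsOf ts)) : IsLinear (ts.map (Term.subst fun v => .var (r v))) := by
  obtain ⟨xs, hxs, rfl⟩ := h
  rw [varsOf_map_var] at hr
  exact ⟨xs.map r, hxs.map_on fun x hx y hy => hr hx hy, by simp⟩

theorem simplyModedFrom_append {S : Set V} {Q₁ Q₂ : List (Atom P F V)} :
    SimplyModedFrom S (Q₁ ++ Q₂) ↔
      SimplyModedFrom S Q₁ ∧ SimplyModedFrom (S ∪ varsOf (insOf Q₁)) Q₂ := by
  induction Q₁ generalizing S with
  | nil => simp [SimplyModedFrom]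
  | cons a Q ih => simp [SimplyModedFrom, ih, Set.union_assoc, and_assoc]

theorem SimplyModedFrom.anti {S T : Set V} {Q : List (Atom P F V)} (h : SimplyModedFrom S Q)
    (hTS : T ⊆ S) : SimplyModedFrom T Q := by
  induction Q generalizing S T with
  | nil => trivial
  | cons a Q ih =>
    exact ⟨h.1.mono_right (Set.union_subset_union_left _ hTS),
      ih h.2 (Set.union_subset_union_left _ hTS)⟩

theorem SimplyModedFrom.map_subst {S T : Set V} {σ : V → Term F V} {Q : List (Atom P F V)}
    (h : SimplyModedFrom S Q) (hout : ∀ v ∈ varsOf (outsOf Q), σ v = .var v)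
    (hin : ∀ v ∈ varsOf (insOf Q), ∀ w, VarIn w (σ v) → w = v ∨ w ∈ T)
    (hT : Disjoint T (varsOf (outsOf Q))) :
    SimplyModedFrom (S ∪ T) (Q.map (Atom.subst σ)) := by
  induction Q generalizing S with
  | nil => trivial
  | cons a Q ih =>
    simp only [outsOf_cons, insOf_cons, varsOf_append, Set.mem_union, Set.disjoint_union_right,
      or_imp, forall_and] at hout hin hT
    have hsub : varsOf (a.inputs.map (Term.subst σ)) ⊆ varsOf a.inputs ∪ T := fun w hw => by
      obtain ⟨v, hv, hwv⟩ := mem_varsOf_map_subst.1 hw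
      rcases hin.1 v hv w hwv with rfl | hw
      exacts [.inl hv, .inr hw]
    simp only [List.map_cons, SimplyModedFrom, Atom.outputs_subst, Atom.inputs_subst]
    refine ⟨?_, (ih h.2 hout.2 hin.2 hT.2).anti ?_⟩
    · rw [map_subst_eq_self hout.1]
      refine Disjoint.mono_right ?_ (Set.disjoint_union_right.2 ⟨h.1, hT.1.symm⟩)
      intro w
      grind
    · intro w
      grind

theorem SimplyModedFrom.map_rename {S : Set V} {r : V → V} {Q : List (Atom P F V)}
    (h : SimplyModedFrom S Q) (hr : Set.InjOn r (S ∪ queryVars Q)) :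
    SimplyModedFrom (r '' S) (Q.map (Atom.subst fun v => .var (r v))) := by
  induction Q generalizing S with
  | nil => trivial
  | cons a Q ih =>
    rw [queryVars_cons, Atom.vars] at hr
    simp only [List.map_cons, SimplyModedFrom, Atom.outputs_subst, Atom.inputs_subst,
      varsOf_map_rename, ← Set.image_union]
    refine ⟨hr.disjoint_image (by grind) (by grind) h.1, ih h.2 (hr.mono (by grind))⟩

theorem SimplyModedQuery.map_rename {Q : List (Atom P F V)} {r : V → V} (h : SimplyModedQuery Q)
    (hr : Set.InjOn r (queryVars Q)) :
    SimplyModedQuery (Q.map (Atom.subst fun v => .var (r v))) := by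
  rw [simplyModedQuery_iff] at h ⊢
  refine ⟨?_, by simpa using h.2.map_rename (by simpa using hr)⟩
  rw [outsOf_map_subst]
  exact h.1.map_rename (hr.mono (by rw [queryVars_eq]; exact Set.subset_union_right))

theorem SimplyModedClause.map_rename {head : Atom P F V} {body : List (Atom P F V)} {r : V → V}
    (h : SimplyModedClause head body) (hr : Set.InjOn r (head.vars ∪ queryVars body)) :
    SimplyModedClause (head.subst fun v => .var (r v))
      (body.map (Atom.subst fun v => .var (r v))) := by
  rw [simplyModedClause_iff] at h ⊢
  rw [queryVars_eq, Atom.vars] at hr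
  refine ⟨?_, ?_⟩
  · rw [outsOf_map_subst]
    exact h.1.map_rename (hr.mono (by grind))
  · rw [Atom.inputs_subst, varsOf_map_rename]
    exact h.2.map_rename (hr.mono (by rw [queryVars_eq]; grind))

theorem WellModedClause.map_subst {head : Atom P F V} {body : List (Atom P F V)}
    (σ : V → Term F V) (h : WellModedClause head body) :
    WellModedClause (head.subst σ) (body.map (Atom.subst σ)) := by
  rw [wellModedClause_iff] at h ⊢
  refine ⟨h.1.map_subst fun v hv w hw => mem_varsOf_map_subst.2 ⟨v, hv, hw⟩, fun w hw => ?_⟩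
  obtain ⟨v, hv, hwv⟩ := mem_varsOf_map_subst.1 hw
  rw [outsOf_map_subst]
  rcases h.2 hv with hv | hv
  exacts [.inl (mem_varsOf_map_subst.2 ⟨v, hv, hwv⟩), .inr (mem_varsOf_map_subst.2 ⟨v, hv, hwv⟩)]

end Modes

section Resolvent

variable {P F V : Type}

open Term

theorem IsUnifier.pred {θ : V → Term F V} {A H : Atom P F V} (h : IsUnifier θ A H) :
    A.pred = H.pred :=
  (congrArg Atom.pred h : (A.subst θ).pred = (H.subst θ).pred)

theorem IsUnifier.inputs {θ : V → Term F V} {A H : Atom P F V} (h : IsUnifier θ A H) :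
    A.inputs.map (Term.subst θ) = H.inputs.map (Term.subst θ) :=
  congrArg Atom.inputs h

theorem IsUnifier.outputs {θ : V → Term F V} {A H : Atom P F V} (h : IsUnifier θ A H) :
    A.outputs.map (Term.subst θ) = H.outputs.map (Term.subst θ) :=
  congrArg Atom.outputs h

theorem IsUnifier.not_varIn_of_mem_inputs {θ : V → Term F V} {A H : Atom P F V}
    (h : IsUnifier θ A H) (hA : varsOf A.inputs = ∅) {v w : V} (hv : v ∈ varsOf H.inputs) :
    ¬ VarIn w (θ v) := fun hw => by
  have hw : w ∈ varsOf (H.inputs.map (Term.subst θ)) := mem_varsOf_map_subst.2 ⟨v, hv, hw⟩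
  rw [← h.inputs, map_subst_eq_self (by simp [hA])] at hw
  simp [hA] at hw

theorem IsUnifier.eqOn_inputs {σ σ' : V → Term F V} {A H : Atom P F V} (hσ : IsUnifier σ A H)
    (hσ' : IsUnifier σ' A H) (hA : varsOf A.inputs = ∅) :
    ∀ v ∈ varsOf H.inputs, σ v = σ' v := by
  have hfix : ∀ τ : V → Term F V, A.inputs.map (Term.subst τ) = A.inputs := fun τ =>
    map_subst_eq_self (by simp [hA])
  rw [← map_subst_eq_map_subst_iff, ← hσ.inputs, ← hσ'.inputs, hfix, hfix]

theorem WellModedQuery.head_inputs {A : Atom P F V} {rest : List (Atom P F V)}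
    (h : WellModedQuery (A :: rest)) : varsOf A.inputs = ∅ :=
  Set.subset_empty_iff.1 (wellModedQuery_iff.1 h).1

theorem SimplyModedQuery.head_outputs {A : Atom P F V} {rest : List (Atom P F V)}
    (h : SimplyModedQuery (A :: rest)) : IsLinear A.outputs :=
  (isLinear_append.1 (simplyModedQuery_iff.1 h).1).1

theorem SimplyModedFrom.disjoint_outsOf {S : Set V} {Q : List (Atom P F V)}
    (h : SimplyModedFrom S Q) : Disjoint S (varsOf (outsOf Q)) := by
  induction Q generalizing S with
  | nil => simp
  | cons a Q ih =>
    rw [outsOf_cons, varsOf_append, Set.disjoint_union_right]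
    exact ⟨(Set.disjoint_union_right.1 h.1).1.symm, (ih h.2).mono_left Set.subset_union_left⟩

theorem varsOf_insOf_subset (Q : List (Atom P F V)) : varsOf (insOf Q) ⊆ queryVars Q := by
  rw [queryVars_eq]
  exact Set.subset_union_left

theorem varsOf_outsOf_subset (Q : List (Atom P F V)) : varsOf (outsOf Q) ⊆ queryVars Q := by
  rw [queryVars_eq]
  exact Set.subset_union_right

/-- Well-modedness survives a resolution step with any unifier: the selected atom has ground
inputs, so the unifier grounds the head inputs, and the head outputs are produced by the body. -/
theorem WellModedQuery.resolvent {A H : Atom P F V} {rest body : List (Atom P F V)}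
    {θ : V → Term F V} (hQ : WellModedQuery (A :: rest)) (hC : WellModedClause H body)
    (hθ : IsUnifier θ A H) : WellModedQuery ((body ++ rest).map (Atom.subst θ)) := by
  have hA := hQ.head_inputs
  rw [wellModedQuery_iff] at hQ ⊢
  rw [wellModedClause_iff] at hC
  rw [List.map_append, wellModedFrom_append, outsOf_map_subst]
  refine ⟨hC.1.map_subst fun v hv w hw => (hθ.not_varIn_of_mem_inputs hA hv hw).elim,
    hQ.2.map_subst fun v hv w hw => ?_⟩
  rw [Set.empty_union] at hv
  have hw : w ∈ varsOf (H.outputs.map (Term.subst θ)) := by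
    rw [← hθ.outputs]
    exact mem_varsOf_map_subst.2 ⟨v, hv, hw⟩
  obtain ⟨u, hu, hwu⟩ := mem_varsOf_map_subst.1 hw
  rcases hC.2 hu with hu | hu
  · exact (hθ.not_varIn_of_mem_inputs hA hu hwu).elim
  · exact .inr (mem_varsOf_map_subst.2 ⟨u, hu, hwu⟩)

/-- The conditions on `μ` are those satisfied by `doubleMatcher`, the mgu `θ₁θ₂` built below. -/
theorem SimplyModedQuery.resolvent {A H : Atom P F V} {rest body : List (Atom P F V)}
    {μ : V → Term F V} (hQ : SimplyModedQuery (A :: rest)) (hCW : WellModedClause H body)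
    (hCS : SimplyModedClause H body)
    (hdisj : Disjoint (queryVars (A :: rest)) (H.vars ∪ queryVars body))
    (hfix : ∀ v, v ∉ varsOf H.inputs → v ∉ varsOf A.outputs → μ v = .var v)
    (hground : ∀ v ∈ varsOf H.inputs, ∀ w, ¬ VarIn w (μ v))
    (hout : ∀ v ∈ varsOf A.outputs, ∀ w, VarIn w (μ v) →
      w ∈ varsOf H.outputs ∧ w ∉ varsOf H.inputs) :
    SimplyModedQuery ((body ++ rest).map (Atom.subst μ)) := by
  rw [simplyModedQuery_iff] at hQ ⊢
  rw [simplyModedClause_iff] at hCS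
  rw [wellModedClause_iff] at hCW
  obtain ⟨⟨-, hlinR, hAR⟩, -, hSMR⟩ := And.intro (isLinear_append.1 hQ.1) hQ.2
  rw [queryVars_cons, Atom.vars, Set.disjoint_union_left, Set.disjoint_union_right,
    Set.disjoint_union_right, Set.disjoint_union_left, Set.disjoint_union_left] at hdisj
  obtain ⟨⟨-, -, hAoB⟩, hRH, hRB⟩ := hdisj
  have hBout : ∀ v ∈ varsOf (outsOf body), μ v = .var v := fun v hv =>
    hfix v (hCS.2.disjoint_outsOf.notMem_of_mem_right hv)
      (hAoB.notMem_of_mem_right (varsOf_outsOf_subset _ hv))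
  have hRout : ∀ v ∈ varsOf (outsOf rest), μ v = .var v := fun v hv =>
    hfix v (fun h => hRH.notMem_of_mem_left (varsOf_outsOf_subset _ hv) (.inl h))
      (hAR.notMem_of_mem_right hv)
  have hBin : ∀ v ∈ varsOf (insOf body), ∀ w, VarIn w (μ v) → w = v ∨ w ∈ (∅ : Set V) := by
    intro v hv w hw
    by_cases hvH : v ∈ varsOf H.inputs
    · exact (hground v hvH w hw).elim
    · rw [hfix v hvH (hAoB.notMem_of_mem_right (varsOf_insOf_subset _ hv)), varIn_var_iff] at hw
      exact .inl hw
  have hRin : ∀ v ∈ varsOf (insOf rest), ∀ w, VarIn w (μ v) → w = v ∨ w ∈ queryVars body := by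
    intro v hv w hw
    by_cases hvA : v ∈ varsOf A.outputs
    · obtain ⟨hwH, hwnH⟩ := hout v hvA w hw
      exact .inr (varsOf_outsOf_subset _ ((hCW.2 hwH).resolve_left hwnH))
    · have hvH : v ∉ varsOf H.inputs := fun h =>
        hRH.notMem_of_mem_left (varsOf_insOf_subset _ hv) (.inl h)
      rw [hfix v hvH hvA, varIn_var_iff] at hw
      exact .inl hw
  refine ⟨?_, ?_⟩
  · rw [outsOf_map_subst, outsOf_append, List.map_append, map_subst_eq_self hBout,
      map_subst_eq_self hRout]
    exact isLinear_append.2 ⟨hCS.1, hlinR,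
      (hRB.mono (varsOf_outsOf_subset _) (varsOf_outsOf_subset _)).symm⟩
  · rw [List.map_append, simplyModedFrom_append]
    refine ⟨(hCS.2.map_subst hBout hBin (by simp)).anti (Set.empty_subset _),
      (hSMR.map_subst hRout hRin (hRB.mono_left (varsOf_outsOf_subset _)).symm).anti ?_⟩
    intro w hw
    simp only [insOf_map_subst, Set.empty_union, mem_varsOf_map_subst] at hw
    obtain ⟨v, hv, hwv⟩ := hw
    obtain rfl | h := hBin v hv w hwv
    · exact .inr (varsOf_insOf_subset _ hv)
    · exact h.elim

end Resolvent

section DoubleMatching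

variable {P F V : Type}

open Term

open Classical in
/-- The matching `θ₁` of the input positions of `H` to those of the selected atom. -/
noncomputable def inputMatcher (H : Atom P F V) (σ : V → Term F V) : V → Term F V :=
  fun v => if v ∈ varsOf H.inputs then σ v else .var v

open Classical in
/-- The substitution `xs[i] ↦ ts[i]`. -/
noncomputable def outputMatcher (xs : List V) (ts : List (Term F V)) : V → Term F V :=
  fun v => if v ∈ xs then ts.getD (xs.idxOf v) (.var v) else .var v

theorem inputMatcher_of_not_mem {H : Atom P F V} {σ : V → Term F V} {v : V}
    (hv : v ∉ varsOf H.inputs) : inputMatcher H σ v = .var v :=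
  if_neg hv

theorem outputMatcher_of_not_mem {xs : List V} {ts : List (Term F V)} {v : V} (hv : v ∉ xs) :
    outputMatcher xs ts v = .var v :=
  if_neg hv

open Classical in
theorem outputMatcher_mem {xs : List V} {ts : List (Term F V)} {v : V} (hv : v ∈ xs)
    (hlen : xs.length = ts.length) : outputMatcher xs ts v ∈ ts := by
  have hi : xs.idxOf v < ts.length := hlen ▸ List.idxOf_lt_length_iff.2 hv
  rw [outputMatcher, if_pos hv, List.getD_eq_getElem _ _ hi]
  exact List.getElem_mem hi

open Classical in
theorem map_outputMatcher {xs : List V} {ts : List (Term F V)} (hxs : xs.Nodup)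
    (hlen : xs.length = ts.length) :
    (xs.map .var).map (Term.subst (outputMatcher xs ts)) = ts := by
  refine List.ext_getElem (by simp [hlen]) fun i h₁ h₂ => ?_
  simp only [List.map_map, Function.comp_apply, List.getElem_map, subst_var, outputMatcher,
    if_pos (List.getElem_mem _), hxs.idxOf_getElem]
  exact List.getD_eq_getElem _ _ h₂

noncomputable def doubleMatcher (H : Atom P F V) (xs : List V) (σ : V → Term F V) :
    V → Term F V :=
  Subst.comp (inputMatcher H σ) (outputMatcher xs (H.subst (inputMatcher H σ)).outputs)

variable {A H : Atom P F V} {xs : List V} {σ σ' : V → Term F V}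

theorem map_subst_inputMatcher (hσ : IsUnifier σ A H) (hA : varsOf A.inputs = ∅) :
    H.inputs.map (Term.subst (inputMatcher H σ)) = A.inputs := by
  rw [(map_subst_eq_map_subst_iff (σ := inputMatcher H σ) (τ := σ)).2 fun v hv => if_pos hv,
    ← hσ.inputs, map_subst_eq_self (by simp [hA])]

theorem not_varIn_inputMatcher (hσ : IsUnifier σ A H) (hA : varsOf A.inputs = ∅) {v w : V}
    (hv : v ∈ varsOf H.inputs) : ¬ VarIn w (inputMatcher H σ v) := by
  rw [inputMatcher, if_pos hv]
  exact hσ.not_varIn_of_mem_inputs hA hv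

theorem varIn_inputMatcher (hσ : IsUnifier σ A H) (hA : varsOf A.inputs = ∅) {v w : V}
    (hw : VarIn w (inputMatcher H σ v)) : w = v ∧ v ∉ varsOf H.inputs := by
  by_cases hv : v ∈ varsOf H.inputs
  · exact (not_varIn_inputMatcher hσ hA hv hw).elim
  · rw [inputMatcher_of_not_mem hv, varIn_var_iff] at hw
    exact ⟨hw, hv⟩

theorem mem_varsOf_outputs_inputMatcher (hσ : IsUnifier σ A H) (hA : varsOf A.inputs = ∅)
    {w : V} (hw : w ∈ varsOf (H.subst (inputMatcher H σ)).outputs) :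
    w ∈ varsOf H.outputs ∧ w ∉ varsOf H.inputs := by
  obtain ⟨v, hv, hwv⟩ := mem_varsOf_map_subst.1 hw
  obtain ⟨rfl, hvH⟩ := varIn_inputMatcher hσ hA hwv
  exact ⟨hv, hvH⟩

theorem comp_inputMatcher (hσ : IsUnifier σ A H) (hσ' : IsUnifier σ' A H)
    (hA : varsOf A.inputs = ∅) : Subst.comp (inputMatcher H σ) σ' = σ' := by
  funext v
  by_cases hv : v ∈ varsOf H.inputs
  · rw [Subst.comp, (subst_eq_subst_iff (τ := .var)).2 fun w hw =>
      (not_varIn_inputMatcher hσ hA hv hw).elim, subst_var_eq_id, id, inputMatcher, if_pos hv]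
    exact hσ.eqOn_inputs hσ' hA v hv
  · rw [Subst.comp, inputMatcher_of_not_mem hv, subst_var]

theorem length_outputs_inputMatcher (hσ : IsUnifier σ A H) (hAout : A.outputs = xs.map .var) :
    xs.length = (H.subst (inputMatcher H σ)).outputs.length := by
  simpa [hAout] using congrArg List.length hσ.outputs

theorem comp_outputMatcher (hσ : IsUnifier σ A H) (hσ' : IsUnifier σ' A H)
    (hA : varsOf A.inputs = ∅) (hAout : A.outputs = xs.map .var) (hxs : xs.Nodup) :
    Subst.comp (outputMatcher xs (H.subst (inputMatcher H σ)).outputs) σ' = σ' := by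
  set θ₂ := outputMatcher xs (H.subst (inputMatcher H σ)).outputs
  funext v
  by_cases hv : v ∈ xs
  · have h : xs.map (Subst.comp θ₂ σ') = xs.map σ' :=
      calc xs.map (Subst.comp θ₂ σ')
          = ((xs.map .var).map (Term.subst θ₂)).map (Term.subst σ') := by
            simp [Function.comp_def, Subst.comp]
        _ = H.outputs.map (Term.subst σ') := by
            rw [map_outputMatcher hxs (length_outputs_inputMatcher hσ hAout), Atom.outputs_subst,
              map_subst_subst, comp_inputMatcher hσ hσ' hA]
        _ = xs.map σ' := by simp [← hσ'.outputs, hAout, Function.comp_def]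
    exact List.map_inj_left.1 h v hv
  · rw [Subst.comp, show θ₂ v = .var v from outputMatcher_of_not_mem hv, subst_var]

theorem isMGU_doubleMatcher (hσ : IsUnifier σ A H) (hA : varsOf A.inputs = ∅)
    (hAout : A.outputs = xs.map .var) (hxs : xs.Nodup) (hdisj : Disjoint A.vars H.vars) :
    IsMGU (doubleMatcher H xs σ) A H := by
  rw [doubleMatcher]
  set θ₁ := inputMatcher H σ
  set θ₂ := outputMatcher xs (H.subst θ₁).outputs
  have hθ₁A : A.outputs.map (Term.subst θ₁) = A.outputs := map_subst_eq_self fun v hv =>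
    inputMatcher_of_not_mem fun h => hdisj.notMem_of_mem_left (.inr hv) (.inl h)
  have hθ₂A : A.outputs.map (Term.subst θ₂) = (H.subst θ₁).outputs := by
    rw [hAout]
    exact map_outputMatcher hxs (length_outputs_inputMatcher hσ hAout)
  have hθ₂H : (H.subst θ₁).outputs.map (Term.subst θ₂) = (H.subst θ₁).outputs :=
    map_subst_eq_self fun v hv => outputMatcher_of_not_mem fun hvx => by
      refine hdisj.notMem_of_mem_left (.inr ?_) (.inr (mem_varsOf_outputs_inputMatcher hσ hA hv).1)
      simpa [hAout, varsOf_map_var] using hvx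
  have hground : ∀ τ : V → Term F V, A.inputs.map (Term.subst τ) = A.inputs := fun τ =>
    map_subst_eq_self (by simp [hA])
  refine ⟨?_, fun σ' hσ' => ⟨σ', fun v => ?_⟩⟩
  · simp only [IsUnifier, Atom.subst, Atom.mk.injEq, ← map_subst_subst]
    refine ⟨hσ.pred, ?_, ?_⟩
    · rw [hground, map_subst_inputMatcher hσ hA, hground]
    · rw [hθ₁A, hθ₂A]
      exact hθ₂H.symm
  · rw [Subst.comp, subst_subst, comp_outputMatcher hσ hσ' hA hAout hxs]
    exact (congrFun (comp_inputMatcher hσ hσ' hA) v).symm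

theorem doubleMatcher_of_not_mem (hAout : A.outputs = xs.map .var) {v : V}
    (hvH : v ∉ varsOf H.inputs) (hvA : v ∉ varsOf A.outputs) : doubleMatcher H xs σ v = .var v := by
  rw [hAout, varsOf_map_var] at hvA
  rw [doubleMatcher, Subst.comp, inputMatcher_of_not_mem hvH, subst_var, outputMatcher_of_not_mem hvA]

theorem not_varIn_doubleMatcher (hσ : IsUnifier σ A H) (hA : varsOf A.inputs = ∅) {v w : V}
    (hv : v ∈ varsOf H.inputs) : ¬ VarIn w (doubleMatcher H xs σ v) :=
  fun hw => by
    obtain ⟨u, hu, -⟩ := varIn_subst.1 hw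
    exact not_varIn_inputMatcher hσ hA hv hu

theorem varIn_doubleMatcher (hσ : IsUnifier σ A H) (hA : varsOf A.inputs = ∅)
    (hAout : A.outputs = xs.map .var) (hdisj : Disjoint A.vars H.vars) {v w : V}
    (hvA : v ∈ varsOf A.outputs) (hw : VarIn w (doubleMatcher H xs σ v)) :
    w ∈ varsOf H.outputs ∧ w ∉ varsOf H.inputs := by
  have hvH : v ∉ varsOf H.inputs := fun h => hdisj.notMem_of_mem_left (.inr hvA) (.inl h)
  rw [doubleMatcher, Subst.comp, inputMatcher_of_not_mem hvH, subst_var] at hw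
  rw [hAout, varsOf_map_var] at hvA
  exact mem_varsOf_outputs_inputMatcher hσ hA
    ⟨_, outputMatcher_mem hvA (length_outputs_inputMatcher hσ hAout), hw⟩

end DoubleMatching

section Persistence

variable {P F V : Type}

open Term

theorem exists_injOn_of_subst_eq_var {U : Set V} {τ τ' : V → Term F V}
    (h : ∀ v ∈ U, (τ v).subst τ' = .var v) :
    ∃ r : V → V, Set.InjOn r U ∧ ∀ v ∈ U, τ v = .var (r v) := by
  have hvar : ∀ v ∈ U, ∃ w, τ v = .var w := fun v hv => by
    cases hτv : τ v with
    | var w => exact ⟨w, rfl⟩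
    | fn f args => simpa [hτv] using h v hv
  choose! r hr using hvar
  refine ⟨r, fun v₁ h₁ v₂ h₂ he => ?_, hr⟩
  have h₁₂ := h v₁ h₁
  rw [hr v₁ h₁, he, ← hr v₂ h₂, h v₂ h₂] at h₁₂
  exact (Term.var.inj h₁₂).symm

theorem map_atomSubst_map_atomSubst (σ τ : V → Term F V) (Q : List (Atom P F V)) :
    (Q.map (Atom.subst σ)).map (Atom.subst τ) = Q.map (Atom.subst (Subst.comp σ τ)) := by
  simp [Function.comp_def, Atom.subst_subst]

/-- Two most general unifiers give resolvents that are variants of each other, so simple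
modedness of the resolvent does not depend on the choice of the mgu. -/
theorem SimplyModedQuery.map_subst_of_isMGU {A H : Atom P F V} {L : List (Atom P F V)}
    {μ θ : V → Term F V} (hμ : IsMGU μ A H) (hθ : IsMGU θ A H)
    (h : SimplyModedQuery (L.map (Atom.subst μ))) : SimplyModedQuery (L.map (Atom.subst θ)) := by
  obtain ⟨τ, hτ⟩ := hμ.2 θ hθ.1
  obtain ⟨τ', hτ'⟩ := hθ.2 μ hμ.1
  have eθ : L.map (Atom.subst θ) = (L.map (Atom.subst μ)).map (Atom.subst τ) := by
    rw [map_atomSubst_map_atomSubst, show θ = Subst.comp μ τ from funext hτ]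
  have eμ : L.map (Atom.subst μ) = (L.map (Atom.subst θ)).map (Atom.subst τ') := by
    rw [map_atomSubst_map_atomSubst, show μ = Subst.comp θ τ' from funext hτ']
  have hround : (L.map (Atom.subst μ)).map (Atom.subst (Subst.comp τ τ')) =
      (L.map (Atom.subst μ)).map (Atom.subst .var) := by
    rw [← map_atomSubst_map_atomSubst, ← eθ, ← eμ, List.map_congr_left fun a _ =>
      Atom.subst_var_self a, List.map_id']
  obtain ⟨r, hr, hτr⟩ := exists_injOn_of_subst_eq_var (map_atomSubst_eq_iff.1 hround)
  rw [eθ, map_atomSubst_eq_iff.2 hτr]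
  exact h.map_rename hr

theorem LDStep.wellModedQuery_and_simplyModedQuery {Prog : Set (Clause P F V)}
    (hProgWM : ∀ c ∈ Prog, WellModedClause c.head c.body)
    (hProgSM : ∀ c ∈ Prog, SimplyModedClause c.head c.body) {Q Q' : List (Atom P F V)}
    (hstep : LDStep Prog Q Q') (hWM : WellModedQuery Q) (hSM : SimplyModedQuery Q) :
    WellModedQuery Q' ∧ SimplyModedQuery Q' := by
  obtain ⟨A, rest, c, ρ, θ, rfl, hc, hρ, hdisj, hθ, rfl⟩ := hstep
  have hCW := (hProgWM c hc).map_subst fun v => .var (ρ v)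
  have hCS := (hProgSM c hc).map_rename hρ.injOn
  refine ⟨hWM.resolvent hCW hθ.1, ?_⟩
  obtain ⟨xs, hxs, hAout⟩ := hSM.head_outputs
  have hA := hWM.head_inputs
  have hAH : Disjoint A.vars (c.subst fun v => .var (ρ v)).head.vars :=
    (hdisj.mono_left (by simp [queryVars_cons])).mono_right Set.subset_union_left
  exact SimplyModedQuery.map_subst_of_isMGU
    (isMGU_doubleMatcher hθ.1 hA hAout hxs hAH) hθ
    (hSM.resolvent hCW hCS hdisj (fun _ => doubleMatcher_of_not_mem hAout)
      (fun _ hv _ => not_varIn_doubleMatcher hθ.1 hA hv)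
      (fun _ hv _ => varIn_doubleMatcher hθ.1 hA hAout hAH hv))

theorem wellModedQuery_and_simplyModedQuery_of_reflTransGen {Prog : Set (Clause P F V)}
    (hProgWM : ∀ c ∈ Prog, WellModedClause c.head c.body)
    (hProgSM : ∀ c ∈ Prog, SimplyModedClause c.head c.body) {Q₀ Q : List (Atom P F V)}
    (h : Relation.ReflTransGen (LDStep Prog) Q₀ Q) (hWM : WellModedQuery Q₀)
    (hSM : SimplyModedQuery Q₀) : WellModedQuery Q ∧ SimplyModedQuery Q := by
  induction h with
  | refl => exact ⟨hWM, hSM⟩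
  | tail _ hstep ih => exact hstep.wellModedQuery_and_simplyModedQuery hProgWM hProgSM ih.1 ih.2

end Persistence

theorem well_and_simply_moded_unification_free_general
    {P F V : Type} (Prog : Set (Clause P F V))
    (hProgWM : ∀ c ∈ Prog, WellModedClause c.head c.body)
    (hProgSM : ∀ c ∈ Prog, SimplyModedClause c.head c.body)
    (Q₀ : List (Atom P F V)) (hQ₀WM : WellModedQuery Q₀) (hQ₀SM : SimplyModedQuery Q₀)
    (Q : List (Atom P F V))
    (hreach : Relation.ReflTransGen (LDStep Prog) Q₀ Q)
    (A : Atom P F V) (rest : List (Atom P F V)) (hsel : Q = A :: rest)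
    (c : Clause P F V)
    (H : Atom P F V) (Bbar : List (Atom P F V))
    (hdisj : Disjoint (queryVars Q) (H.vars ∪ queryVars Bbar))
    (hunif : ∃ σ : V → Term F V, IsUnifier σ A H) :
    ∃ θ₁ θ₂ : V → Term F V,
      (∀ v : V, v ∉ H.vars → θ₁ v = Term.var v) ∧
      H.inputs.map (Term.subst θ₁) = A.inputs ∧
      (∀ v : V, v ∉ A.vars → θ₂ v = Term.var v) ∧
      A.outputs.map (Term.subst θ₂) = (H.subst θ₁).outputs ∧
      IsMGU (Subst.comp θ₁ θ₂) A H := by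
  obtain ⟨hWM, hSM⟩ :=
    wellModedQuery_and_simplyModedQuery_of_reflTransGen hProgWM hProgSM hreach hQ₀WM hQ₀SM
  subst hsel
  obtain ⟨σ, hσ⟩ := hunif
  obtain ⟨xs, hxs, hAout⟩ := hSM.head_outputs
  have hA := hWM.head_inputs
  have hAH : Disjoint A.vars H.vars :=
    (hdisj.mono_left (by simp [queryVars_cons])).mono_right Set.subset_union_left
  refine ⟨inputMatcher H σ, outputMatcher xs (H.subst (inputMatcher H σ)).outputs,
    fun v hv => inputMatcher_of_not_mem fun h => hv (.inl h), map_subst_inputMatcher hσ hA,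
    fun v hv => outputMatcher_of_not_mem fun h => hv (.inr ?_), ?_,
    isMGU_doubleMatcher hσ hA hAout hxs hAH⟩
  · simpa [hAout, varsOf_map_var] using h
  · rw [hAout]
    exact map_outputMatcher hxs (length_outputs_inputMatcher hσ hAout)

/-- If a program `Prog` and a query `Q₀` are both well-moded and simply moded,
then every LD-derivation of `Q₀` in `Prog` is unification-free: whenever an
atom `A` is selected (the leftmost atom of a query reachable from `Q₀` by
LD-resolution steps) and resolved via a variable-disjoint variant `H ← Bbar`
of a clause of `Prog` (with which `A` is unifiable), the unification of `A`
and `H` reduces to a double matching: there is a substitution `θ₁` acting only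
on variables of `H` matching the input positions of `H` to those of `A`, and a
substitution `θ₂` acting only on variables of `A` matching the output positions
of `A` to those of `Hθ₁`, and their composition is a most general unifier of
`A` and `H`. -/
theorem well_and_simply_moded_unification_free
    {P F V : Type} (Prog : Set (Clause P F V))
    (hProgWM : ∀ c ∈ Prog, WellModedClause c.head c.body)
    (hProgSM : ∀ c ∈ Prog, SimplyModedClause c.head c.body)
    (Q₀ : List (Atom P F V)) (hQ₀WM : WellModedQuery Q₀) (hQ₀SM : SimplyModedQuery Q₀)
    (Q : List (Atom P F V))
    (hreach : Relation.ReflTransGen (LDStep Prog) Q₀ Q)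
    (A : Atom P F V) (rest : List (Atom P F V)) (hsel : Q = A :: rest)
    (c : Clause P F V) (hc : c ∈ Prog) (ρ : V → V) (hρ : Function.Injective ρ)
    (H : Atom P F V) (Bbar : List (Atom P F V))
    (hH : H = (c.subst (fun v => Term.var (ρ v))).head)
    (hB : Bbar = (c.subst (fun v => Term.var (ρ v))).body)
    (hdisj : Disjoint (queryVars Q) (H.vars ∪ queryVars Bbar))
    (hunif : ∃ σ : V → Term F V, IsUnifier σ A H) :
    ∃ θ₁ θ₂ : V → Term F V,
      (∀ v : V, v ∉ H.vars → θ₁ v = Term.var v) ∧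
      H.inputs.map (Term.subst θ₁) = A.inputs ∧
      (∀ v : V, v ∉ A.vars → θ₂ v = Term.var v) ∧
      A.outputs.map (Term.subst θ₂) = (H.subst θ₁).outputs ∧
      IsMGU (Subst.comp θ₁ θ₂) A H :=
  well_and_simply_moded_unification_free_general Prog hProgWM hProgSM Q₀ hQ₀WM hQ₀SM Q hreach A rest
    hsel c H Bbar hdisj hunif
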